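/- arXiv:1911.04055 — 2 statements merged into one kernel-verified Lean document; each statement's English description precedes it below -/
import Mathlib

section
/- For each odd integer k ≥ 3, the graph B_k satisfies cms(B_k) ≤ (k−1)/2, and the matching number of B_k equals (k+1)/2. -/
open SimpleGraph

/-- Two edges are adjacent if they are distinct and share a vertex. -/
def EdgesAdj {V : Type*} (e e' : Sym2 V) : Prop :=
  e ≠ e' ∧ ∃ v : V, v ∈ e ∧ v ∈ e'

/-- `ms` of an ordering of a graph, the ordering being given as the list of edges
in increasing label order: the largest `s ∈ {1,…,m}` such that any ordered pair of
adjacent edges `(e,e')` with `ℓ(e) < ℓ(e')` has forward distance at least `s`. -/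
noncomputable def msList {V : Type*} (L : List (Sym2 V)) : ℕ :=
  sSup {s | 1 ≤ s ∧ s ≤ L.length ∧ ∀ i j e e', i < j →
    L[i]? = some e → L[j]? = some e' → EdgesAdj e e' → s ≤ j - i}

/-- `cms` of an ordering of a graph: the largest `s ∈ {1,…,m}` such that every pair of
adjacent edges is at cyclic distance at least `s`. -/
noncomputable def cmsList {V : Type*} (L : List (Sym2 V)) : ℕ :=
  sSup {s | 1 ≤ s ∧ s ≤ L.length ∧ ∀ i j e e', i < j →
    L[i]? = some e → L[j]? = some e' → EdgesAdj e e' →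
    s ≤ min (j - i) (L.length - (j - i))}

/-- `L` is an ordering of `G`: it lists every edge of `G` exactly once. -/
def IsOrdering {V : Type*} (G : SimpleGraph V) (L : List (Sym2 V)) : Prop :=
  L.Nodup ∧ ∀ e, e ∈ L ↔ e ∈ G.edgeSet

/-- Cyclic matching sequenceability of a graph: the maximum of `cmsList` over orderings. -/
noncomputable def cms {V : Type*} (G : SimpleGraph V) : ℕ :=
  sSup {k | ∃ L, IsOrdering G L ∧ cmsList L = k}

/-- Number of edges of a graph. -/
noncomputable def numEdges {V : Type*} (G : SimpleGraph V) : ℕ :=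
  Nat.card G.edgeSet

/-- The chromatic index: the least number of colours in a proper edge colouring. -/
noncomputable def chromaticIndex {V : Type*} (G : SimpleGraph V) : ℕ :=
  sInf {c | ∃ f : G.edgeSet → Fin c, ∀ e e' : G.edgeSet, EdgesAdj e.1 e'.1 → f e ≠ f e'}

/-- The edge set of `G` forms a matching (no two distinct edges share a vertex). -/
def IsMatchingGraph {V : Type*} (G : SimpleGraph V) : Prop :=
  ∀ e ∈ G.edgeSet, ∀ e' ∈ G.edgeSet, ¬ EdgesAdj e e'

/-- `G` is regular of degree `d`. -/
def IsRegularGraph {V : Type*} (G : SimpleGraph V) (d : ℕ) : Prop :=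
  ∀ v : V, Nat.card (G.neighborSet v) = d

/-- A finite set of edges of `G` forming a matching. -/
def IsMatchingSet {V : Type*} (G : SimpleGraph V) (M : Finset (Sym2 V)) : Prop :=
  ↑M ⊆ G.edgeSet ∧ ∀ e ∈ M, ∀ e' ∈ M, ¬ EdgesAdj e e'

/-- The matching number of a graph. -/
noncomputable def matchingNumber {V : Type*} (G : SimpleGraph V) : ℕ :=
  sSup {k | ∃ M : Finset (Sym2 V), IsMatchingSet G M ∧ M.card = k}
/-- Adjacency in the complement of `B_k` for odd `k`: the path `0-1-2` together with the
perfect matching `{3,4}, {5,6}, …, {k, k+1}` on the remaining `k-1` vertices. -/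
def compAdjB (a b : ℕ) : Prop :=
  (min a b = 0 ∧ max a b = 1) ∨ (min a b = 1 ∧ max a b = 2) ∨
  (3 ≤ min a b ∧ Odd (min a b) ∧ max a b = min a b + 1)

/-- The graph `B_k`: for even `k` it is the complete graph on `k+1` vertices; for odd `k`
it is the graph on `k+2` vertices whose complement is the vertex-disjoint union of a path
with 3 vertices and a perfect matching on the remaining `k-1` vertices. -/
def BGraph (k : ℕ) : SimpleGraph (Fin (k + 1 + k % 2)) where
  Adj i j := i ≠ j ∧ (k % 2 = 1 → ¬ compAdjB i.val j.val)
  symm := ⟨by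
    rintro i j ⟨hne, h⟩
    refine ⟨hne.symm, fun hk1 hc => h hk1 ?_⟩
    unfold compAdjB at hc ⊢
    rwa [min_comm, max_comm]⟩
  loopless := ⟨fun i h => h.1 rfl⟩

/-!
Let `k = 2s - 1`. If an ordering of the `m` edges of `B_k` had cyclic matching
sequenceability at least `s`, any `s` cyclically consecutive edges would be pairwise disjoint,
so they would cover all but one of the `k + 2 = 2s + 1` vertices. If `s + 1` consecutive edges
`e₀, …, eₛ` all avoided the vertex `1` (the middle of the complementary path), then
`e₁, …, eₛ` would cover every other vertex, and `e₀`, being disjoint from `e₁, …, eₛ₋₁`, would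
equal `eₛ`. Hence every window of `s + 1` consecutive edges meets one of the `k - 1` edges at
`1`, and `m ≤ (k - 1)(s + 1) = (k² + 2k - 3)/2`, whereas `B_k` has `(k² + 2k - 1)/2` edges.
The matching number is at most `⌊(k + 2)/2⌋ = s`, which `{0, 2}, {1, 3}, {4, 5}, …, {k - 1, k}`
attains.
-/

open Finset

section Cyclic

variable {V : Type*}

theorem exists_mem_window [Fintype V] [DecidableEq V] {ι : Type*} [AddMonoidWithOne ι]
    {f : ι → Sym2 V} {s : ℕ} (hV : Fintype.card V ≤ 2 * s + 1) (hdiag : ∀ p, ¬ (f p).IsDiag)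
    (hdisj : ∀ p (t : ℕ), 0 < t → t < s → ∀ x ∈ f p, x ∉ f (p + t))
    (hne : ∀ p, f p ≠ f (p + s)) (v : V) (p : ι) :
    ∃ t ≤ s, v ∈ f (p + t) := by
  by_contra! hmiss
  set W := (range s).biUnion fun u => (f (p + (u + 1 : ℕ))).toFinset
  have hW : #W = 2 * s := by
    rw [card_biUnion, sum_congr rfl fun u _ => Sym2.card_toFinset_of_not_isDiag _ (hdiag _),
      sum_const, card_range, smul_eq_mul, mul_comm]
    intro u hu u' hu' huu'
    rw [Function.onFun, Finset.disjoint_left]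
    intro x hx hx'
    rw [Sym2.mem_toFinset] at hx hx'
    rw [coe_range, Set.mem_Iio] at hu hu'
    rcases Nat.lt_or_gt_of_ne huu' with h | h
    · refine hdisj _ (u' - u) (by omega) (by omega) x hx ?_
      rwa [add_assoc, ← Nat.cast_add, show u + 1 + (u' - u) = u' + 1 by omega]
    · refine hdisj _ (u - u') (by omega) (by omega) x hx' ?_
      rwa [add_assoc, ← Nat.cast_add, show u' + 1 + (u - u') = u + 1 by omega]
  have hWeq : W = univ.erase v := by
    refine eq_of_subset_of_card_le (fun x hx => mem_erase.2 ⟨?_, mem_univ x⟩) ?_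
    · rintro rfl
      obtain ⟨u, hu, hx⟩ := mem_biUnion.1 hx
      exact hmiss (u + 1) (mem_range.1 hu) (Sym2.mem_toFinset.1 hx)
    · rw [card_erase_of_mem (mem_univ v), card_univ, hW]
      omega
  have hlast : ∀ x ∈ f p, x ∈ f (p + s) := by
    intro x hx
    have hxv : x ≠ v := by rintro rfl; exact hmiss 0 (Nat.zero_le s) (by simpa using hx)
    obtain ⟨u, hu, hxu⟩ := mem_biUnion.1 (hWeq ▸ mem_erase.2 ⟨hxv, mem_univ x⟩)
    rw [mem_range] at hu
    rw [Sym2.mem_toFinset] at hxu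
    obtain rfl : u + 1 = s := by
      by_contra h
      exact hdisj p (u + 1) (by omega) (by omega) x hx hxu
    exact hxu
  induction hfp : f p using Sym2.ind with
  | _ x y =>
    have hxy : x ≠ y := fun h => hdiag p (hfp ▸ Sym2.mk_isDiag_iff.2 h)
    refine hne p (hfp.trans ((Sym2.mem_and_mem_iff hxy).1 ⟨?_, ?_⟩).symm) <;>
      exact hlast _ (by simp [hfp])

theorem ZMod.le_card_filter_mul_of_forall_exists_add {m : ℕ} [NeZero m] (P : ZMod m → Prop)
    [DecidablePred P] {s : ℕ} (hP : ∀ p, ∃ t ≤ s, P (p + t)) : m ≤ #{p | P p} * (s + 1) := by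
  have hcover : (univ : Finset (ZMod m)) ⊆
      (univ.filter P).biUnion fun q => (range (s + 1)).image fun t : ℕ => q - t := by
    intro p _
    obtain ⟨t, ht, hpt⟩ := hP p
    exact mem_biUnion.2 ⟨p + t, mem_filter.2 ⟨mem_univ _, hpt⟩,
      mem_image.2 ⟨t, mem_range.2 (Nat.lt_succ_of_le ht), add_sub_cancel_right p _⟩⟩
  calc m = #(univ : Finset (ZMod m)) := (ZMod.card m).symm
    _ ≤ _ := card_le_card hcover
    _ ≤ ∑ q ∈ univ.filter P, #((range (s + 1)).image fun t : ℕ => q - t) := card_biUnion_le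
    _ ≤ ∑ _q ∈ univ.filter P, (s + 1) :=
        sum_le_sum fun q _ => card_image_le.trans (card_range _).le
    _ = #{p | P p} * (s + 1) := by rw [sum_const, smul_eq_mul]

theorem cmsList_le_length (L : List (Sym2 V)) : cmsList L ≤ L.length :=
  csSup_le' fun _ hs => hs.2.1

theorem le_min_of_le_cmsList {L : List (Sym2 V)} {s : ℕ} (hs : 0 < s) (h : s ≤ cmsList L)
    {i j : ℕ} (hij : i < j) (hj : j < L.length) (hadj : EdgesAdj L[i] L[j]) :
    s ≤ min (j - i) (L.length - (j - i)) := by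
  set S := {s | 1 ≤ s ∧ s ≤ L.length ∧ ∀ i j e e', i < j →
    L[i]? = some e → L[j]? = some e' → EdgesAdj e e' → s ≤ min (j - i) (L.length - (j - i))}
  have hne : S.Nonempty := Set.nonempty_iff_ne_empty.2 fun hS => by
    have : cmsList L = 0 := by change sSup S = 0; rw [hS, csSup_empty]; rfl
    omega
  have hmem : sSup S ∈ S := Nat.sSup_mem hne ⟨L.length, fun _ hs => hs.2.1⟩
  exact h.trans (hmem.2.2 i j _ _ hij (List.getElem?_eq_getElem (by omega))
    (List.getElem?_eq_getElem hj) hadj)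

theorem ZMod.add_natCast_ne_self {m : ℕ} (p : ZMod m) {t : ℕ} (ht₀ : 0 < t) (htm : t < m) :
    p + t ≠ p := by
  rw [Ne, add_eq_left, ZMod.natCast_eq_zero_iff]
  exact Nat.not_dvd_of_pos_of_lt ht₀ htm

theorem exists_cyclic_of_le_cmsList {G : SimpleGraph V} {L : List (Sym2 V)} [NeZero L.length]
    (hL : IsOrdering G L) {s : ℕ} (hs : 0 < s) (h : s ≤ cmsList L) :
    ∃ f : ZMod L.length → Sym2 V, Function.Injective f ∧ (∀ p, f p ∈ G.edgeSet) ∧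
      ∀ p (t : ℕ), 0 < t → t < s → ∀ x ∈ f p, x ∉ f (p + t) := by
  set m := L.length
  have hsm : s ≤ m := h.trans (cmsList_le_length L)
  let f : ZMod m → Sym2 V := fun p => L[p.val]'(ZMod.val_lt p)
  have hinj : Function.Injective f := fun p q hpq =>
    ZMod.val_injective m ((hL.1.getElem_inj_iff).1 hpq)
  refine ⟨f, hinj, fun p => (hL.2 _).1 (List.getElem_mem _), ?_⟩
  intro p t ht₀ hts x hx hx'
  have hne : f p ≠ f (p + t) := fun hpq =>
    ZMod.add_natCast_ne_self p ht₀ (by omega) (hinj hpq).symm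
  have ht : (t : ZMod m).val = t := ZMod.val_cast_of_lt (by omega)
  have hp := ZMod.val_lt p
  rcases lt_or_ge (p.val + t) m with hlt | hge
  · have hval : (p + t).val = p.val + t := by rw [ZMod.val_add_of_lt (by omega), ht]
    have := le_min_of_le_cmsList hs h (i := p.val) (j := (p + t).val) (by omega)
      (ZMod.val_lt _) ⟨hne, x, hx, hx'⟩
    omega
  · have hval : (p + t).val = p.val + t - m := by rw [ZMod.val_add_of_le (by omega), ht]
    have := le_min_of_le_cmsList hs h (i := (p + t).val) (j := p.val) (by omega)
      hp ⟨hne.symm, x, hx', hx⟩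
    omega

theorem IsOrdering.length_eq {G : SimpleGraph V} [Fintype G.edgeSet]
    {L : List (Sym2 V)} (hL : IsOrdering G L) : L.length = #G.edgeFinset := by
  classical
  rw [← List.toFinset_card_of_nodup hL.1]
  congr 1
  ext e
  rw [List.mem_toFinset, SimpleGraph.mem_edgeFinset, hL.2]

theorem length_le_degree_mul_of_le_cmsList [Fintype V] [DecidableEq V] {G : SimpleGraph V}
    [DecidableRel G.Adj] {L : List (Sym2 V)} (hL : IsOrdering G L) {s : ℕ} (hs : 0 < s)
    (h : s ≤ cmsList L) (hsL : s < L.length) (hV : Fintype.card V ≤ 2 * s + 1) (v : V) :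
    L.length ≤ G.degree v * (s + 1) := by
  have : NeZero L.length := ⟨by omega⟩
  obtain ⟨f, hinj, hedge, hdisj⟩ := exists_cyclic_of_le_cmsList hL hs h
  have hwindow := exists_mem_window hV (fun p => G.not_isDiag_of_mem_edgeSet (hedge p)) hdisj
    (fun p hp => ZMod.add_natCast_ne_self p hs hsL (hinj hp).symm) v
  calc L.length ≤ #(univ.filter (v ∈ f ·)) * (s + 1) :=
        ZMod.le_card_filter_mul_of_forall_exists_add _ hwindow
    _ ≤ G.degree v * (s + 1) := by
      gcongr
      rw [← G.card_incidenceFinset_eq_degree]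
      exact card_le_card_of_injOn f (fun p hp => (G.mem_incidenceFinset _ _).2
        ⟨hedge p, (mem_filter.1 hp).2⟩) hinj.injOn

end Cyclic

section Matching

variable {V : Type*} {G : SimpleGraph V}

theorem IsMatchingSet.two_mul_card_le [Fintype V] [DecidableEq V] {M : Finset (Sym2 V)}
    (hM : IsMatchingSet G M) : 2 * #M ≤ Fintype.card V := by
  have hdisj : (M : Set (Sym2 V)).PairwiseDisjoint Sym2.toFinset := by
    intro e he e' he' hne
    rw [Function.onFun, Finset.disjoint_left]
    intro x hx hx'
    exact hM.2 e he e' he' ⟨hne, x, Sym2.mem_toFinset.1 hx, Sym2.mem_toFinset.1 hx'⟩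
  calc 2 * #M = #(M.biUnion Sym2.toFinset) := by
        rw [card_biUnion hdisj, sum_congr rfl fun e he =>
          Sym2.card_toFinset_of_not_isDiag e (G.not_isDiag_of_mem_edgeSet (hM.1 he)),
          sum_const, smul_eq_mul, mul_comm]
    _ ≤ Fintype.card V := card_le_univ _

theorem exists_isMatchingSet_of_injOn [DecidableEq V] {n : ℕ} (g : ℕ → V)
    (hg : Set.InjOn g (Set.Iio (2 * n))) (hadj : ∀ i < n, G.Adj (g (2 * i)) (g (2 * i + 1))) :
    ∃ M, IsMatchingSet G M ∧ #M = n := by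
  let e : ℕ → Sym2 V := fun i => s(g (2 * i), g (2 * i + 1))
  have hshare : ∀ i < n, ∀ j < n, ∀ x ∈ e i, x ∈ e j → i = j := by
    intro i hi j hj x hxi hxj
    rw [Sym2.mem_iff] at hxi hxj
    rcases hxi with rfl | rfl <;> rcases hxj with h | h <;>
      have := hg (by simp only [Set.mem_Iio]; omega) (by simp only [Set.mem_Iio]; omega) h <;>
      omega
  refine ⟨(range n).image e, ⟨?_, ?_⟩, ?_⟩
  · intro _ he
    obtain ⟨i, hi, rfl⟩ := mem_image.1 he
    exact hadj i (mem_range.1 hi)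
  · intro _ he _ he' ⟨hne, x, hx, hx'⟩
    obtain ⟨i, hi, rfl⟩ := mem_image.1 he
    obtain ⟨j, hj, rfl⟩ := mem_image.1 he'
    exact hne (by rw [hshare i (mem_range.1 hi) j (mem_range.1 hj) x hx hx'])
  · refine (card_image_of_injOn fun i hi j hj hij => ?_).trans (card_range n)
    exact hshare i (mem_range.1 hi) j (mem_range.1 hj) (g (2 * i)) (Sym2.mem_mk_left _ _)
      (hij ▸ Sym2.mem_mk_left _ _)

theorem matchingNumber_eq {n : ℕ} (hle : ∀ M, IsMatchingSet G M → #M ≤ n)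
    (hex : ∃ M, IsMatchingSet G M ∧ #M = n) : matchingNumber G = n :=
  le_antisymm (csSup_le' (by rintro _ ⟨M, hM, rfl⟩; exact hle M hM))
    (le_csSup ⟨n, by rintro _ ⟨M, hM, rfl⟩; exact hle M hM⟩ hex)

end Matching

section BGraph

open scoped Classical

variable {k : ℕ}

theorem card_fin_BGraph (hk : k % 2 = 1) : Fintype.card (Fin (k + 1 + k % 2)) = k + 2 := by
  simp only [Fintype.card_fin]; omega

theorem compl_BGraph_adj (hk : k % 2 = 1) {i j : Fin (k + 1 + k % 2)} :
    (BGraph k)ᶜ.Adj i j ↔ i ≠ j ∧ compAdjB i j := by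
  simp only [SimpleGraph.compl_adj, BGraph, hk, forall_const, not_and, not_not]
  exact and_congr_right fun hij => ⟨fun h => h hij, fun h _ => h⟩

theorem degree_compl_BGraph_le_one (hk : k % 2 = 1) {v : Fin (k + 1 + k % 2)}
    (hv : v.val ≠ 1) :
    (BGraph k)ᶜ.degree v ≤ 1 := by
  rw [← SimpleGraph.card_neighborFinset_eq_degree, card_le_one]
  intro a ha b hb
  simp only [SimpleGraph.mem_neighborFinset, compl_BGraph_adj hk, compAdjB, Nat.odd_iff] at ha hb
  omega

theorem degree_compl_BGraph_eq_two (hk : k % 2 = 1) {v : Fin (k + 1 + k % 2)}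
    (hv : v.val = 1) :
    (BGraph k)ᶜ.degree v = 2 := by
  have h0 : 0 < k + 1 + k % 2 := by omega
  have h2 : 2 < k + 1 + k % 2 := by omega
  rw [← SimpleGraph.card_neighborFinset_eq_degree, card_eq_two]
  refine ⟨⟨0, h0⟩, ⟨2, h2⟩, by simp, ?_⟩
  ext w
  simp only [SimpleGraph.mem_neighborFinset, compl_BGraph_adj hk, compAdjB, Nat.odd_iff,
    mem_insert, mem_singleton, Fin.ext_iff, ne_eq]
  omega

theorem degree_BGraph_le (hk : k % 2 = 1) {v : Fin (k + 1 + k % 2)} (hv : v.val = 1) :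
    (BGraph k).degree v ≤ k - 1 := by
  have := (BGraph k).degree_compl (v := v)
  rw [degree_compl_BGraph_eq_two hk hv, card_fin_BGraph hk] at this
  omega

theorem le_card_edgeFinset_BGraph (hk : k % 2 = 1) :
    k * (k + 2) ≤ 2 * #(BGraph k).edgeFinset + 1 := by
  have hdeg : ∀ v, (BGraph k).degree v + (BGraph k)ᶜ.degree v = k + 1 := fun v => by
    have := (BGraph k).degree_compl (v := v)
    have := (BGraph k).degree_lt_card_verts v
    rw [card_fin_BGraph hk] at *
    omega
  let one : Fin (k + 1 + k % 2) := ⟨1, by omega⟩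
  have hcompl : ∑ v, (BGraph k)ᶜ.degree v ≤ 2 + (k + 1) := by
    rw [← add_sum_erase _ _ (mem_univ one), degree_compl_BGraph_eq_two hk rfl]
    gcongr
    calc ∑ v ∈ univ.erase one, (BGraph k)ᶜ.degree v ≤ ∑ _v ∈ univ.erase one, 1 :=
          sum_le_sum fun v hv =>
            degree_compl_BGraph_le_one hk fun h => (mem_erase.1 hv).1 (Fin.ext h)
      _ = k + 1 := by
        rw [sum_const, card_erase_of_mem (mem_univ _), card_univ, card_fin_BGraph hk, smul_eq_mul]
        omega
  have hsum : ∑ v, (BGraph k).degree v + ∑ v, (BGraph k)ᶜ.degree v = (k + 2) * (k + 1) := by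
    rw [← sum_add_distrib, sum_congr rfl fun v _ => hdeg v, sum_const, card_univ,
      card_fin_BGraph hk, smul_eq_mul]
  rw [(BGraph k).sum_degrees_eq_twice_card_edges] at hsum
  linarith

theorem exists_isMatchingSet_BGraph (hk : k % 2 = 1) :
    ∃ M, IsMatchingSet (BGraph k) M ∧ #M = (k + 1) / 2 := by
  have : NeZero (k + 1 + k % 2) := ⟨by omega⟩
  have hval : ∀ i < k + 1,
      (Fin.ofNat (k + 1 + k % 2) (Equiv.swap 1 2 i)).val = Equiv.swap 1 2 i :=
    fun i hi => Nat.mod_eq_of_lt (by rw [Equiv.swap_apply_def]; split_ifs <;> omega)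
  -- the pairs `{0, 2}, {1, 3}, {4, 5}, {6, 7}, …, {k - 1, k}`
  refine exists_isMatchingSet_of_injOn (fun i => Fin.ofNat (k + 1 + k % 2) (Equiv.swap 1 2 i))
    ?_ fun i hi => ⟨?_, fun _ => ?_⟩
  · intro a ha b hb hab
    rw [Set.mem_Iio] at ha hb
    rw [Fin.ext_iff, hval a (by omega), hval b (by omega)] at hab
    exact (Equiv.swap 1 2).injective hab
  · rw [ne_eq, Fin.ext_iff, hval (2 * i) (by omega), hval (2 * i + 1) (by omega),
      Equiv.swap_apply_def, Equiv.swap_apply_def]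
    split_ifs <;> omega
  · rw [hval (2 * i) (by omega), hval (2 * i + 1) (by omega), compAdjB, Nat.odd_iff,
      Equiv.swap_apply_def, Equiv.swap_apply_def]
    split_ifs <;> omega

end BGraph

/-- Lemma: for each odd `k ≥ 3`, `cms(B_k) ≤ (k-1)/2` and the matching number of `B_k`
is `(k+1)/2`. -/
theorem cms_BGraph_le_and_matchingNumber (k : ℕ) (hk : 3 ≤ k) (hodd : Odd k) :
    cms (BGraph k) ≤ (k - 1) / 2 ∧ matchingNumber (BGraph k) = (k + 1) / 2 := by
  classical
  have h2 : k % 2 = 1 := Nat.odd_iff.mp hodd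
  refine ⟨csSup_le' ?_, matchingNumber_eq (fun M hM => ?_) (exists_isMatchingSet_BGraph h2)⟩
  · rintro _ ⟨L, hL, rfl⟩
    by_contra! hlt
    obtain ⟨r, rfl⟩ := hodd
    have hE := hL.length_eq ▸ le_card_edgeFinset_BGraph h2
    have hbound := length_le_degree_mul_of_le_cmsList hL (s := r + 1) (by omega) (by omega)
      (by nlinarith) (by rw [card_fin_BGraph h2]; omega) ⟨1, by omega⟩
    have hdeg := Nat.mul_le_mul_right (r + 2) (degree_BGraph_le h2 (v := ⟨1, by omega⟩) rfl)
    rw [show 2 * r + 1 - 1 = 2 * r by omega] at hdeg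
    nlinarith
  · have := hM.two_mul_card_le
    rw [card_fin_BGraph h2] at this
    omega
end

section
/- Let k ≥ 2 be an integer. For all integers n ≥ 3k + 5 such that nk is even, there exists a k-regular graph on n vertices that has B_k as a subgraph. -/
/-! For even `k`, `B_k` is `K_{k+1}`, and the remaining `n - k - 1` vertices carry the
`k/2`-th power of a cycle. For odd `k`, every vertex of `B_k` has degree `k` except the middle
vertex of the complementary path, which has degree `k - 1`. The remaining `m = n - k - 2`
vertices (an odd number, as `n` is even) carry the `(k-1)/2`-th power of the cycle on `ZMod m`
together with the matching `i ↔ i + (m-1)/2` on `1, …, m-1`; this matching avoids the jumps of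
the cycle power, and the vertex `0` it leaves uncovered is joined to the deficient vertex of
`B_k`. -/

open SimpleGraph

namespace ZMod

lemma natCast_eq_natCast_iff_of_lt {m a b : ℕ} (ha : a < m) (hb : b < m) :
    (a : ZMod m) = b ↔ a = b := by
  rw [natCast_eq_natCast_iff', Nat.mod_eq_of_lt ha, Nat.mod_eq_of_lt hb]

lemma natCast_ne_neg_natCast {m a b : ℕ} (hpos : 0 < a + b) (hlt : a + b < m) :
    (a : ZMod m) ≠ -b := fun h =>
  absurd (Nat.le_of_dvd hpos ((natCast_eq_zero_iff _ m).mp (by rw [Nat.cast_add, h,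
    neg_add_cancel]))) (by omega)

end ZMod

namespace SimpleGraph

variable {V W : Type*}

lemma ncard_neighborSet_sum_inl (G : SimpleGraph V) (H : SimpleGraph W) (v : V) :
    ((G ⊕g H).neighborSet (.inl v)).ncard = (G.neighborSet v).ncard := by
  rw [neighborSet_sum_inl, Set.ncard_image_of_injective _ Sum.inl_injective]

lemma ncard_neighborSet_sum_inr (G : SimpleGraph V) (H : SimpleGraph W) (w : W) :
    ((G ⊕g H).neighborSet (.inr w)).ncard = (H.neighborSet w).ncard := by
  rw [neighborSet_sum_inr, Set.ncard_image_of_injective _ Sum.inr_injective]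

lemma ncard_neighborSet_sup_of_disjoint [Finite V] {G H : SimpleGraph V} (h : Disjoint G H)
    (v : V) :
    ((G ⊔ H).neighborSet v).ncard = (G.neighborSet v).ncard + (H.neighborSet v).ncard := by
  rw [neighborSet_sup, Set.ncard_union_eq (disjoint_neighborSet.mpr h v)]

lemma ncard_neighborSet_edge [DecidableEq V] {s t : V} (hst : s ≠ t) (v : V) :
    ((edge s t).neighborSet v).ncard = if v = s ∨ v = t then 1 else 0 := by
  split_ifs with hv
  · rcases hv with rfl | rfl
    · rw [show (edge v t).neighborSet v = {t} by ext; grind [mem_neighborSet]]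
      exact Set.ncard_singleton t
    · rw [show (edge s v).neighborSet v = {s} by ext; grind [mem_neighborSet]]
      exact Set.ncard_singleton s
  · rw [show (edge s t).neighborSet v = ∅ by ext; grind [mem_neighborSet]]
    exact Set.ncard_empty _

lemma neighborSet_circulantGraph {G : Type*} [AddGroup G] (s : Set G) (v : G) :
    (circulantGraph s).neighborSet v = (· + v) '' ((s ∪ -s) \ {0}) := by
  ext w
  simp only [mem_neighborSet, circulantGraph_adj, Set.mem_image, Set.mem_sdiff, Set.mem_union,
    Set.mem_neg, Set.mem_singleton_iff]
  constructor
  · rintro ⟨hvw, hs⟩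
    refine ⟨w - v, ⟨?_, sub_ne_zero.mpr (Ne.symm hvw)⟩, sub_add_cancel w v⟩
    rwa [neg_sub, or_comm]
  · rintro ⟨d, ⟨hd, hd0⟩, rfl⟩
    refine ⟨fun h => hd0 (by simpa using h.symm), ?_⟩
    simpa [or_comm] using hd

lemma ncard_neighborSet_circulantGraph {G : Type*} [AddGroup G] (s : Set G) (v : G) :
    ((circulantGraph s).neighborSet v).ncard = ((s ∪ -s) \ {0}).ncard := by
  rw [neighborSet_circulantGraph, Set.ncard_image_of_injective _ (add_left_injective v)]

def cyclePowerGraph (m r : ℕ) : SimpleGraph (ZMod m) :=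
  circulantGraph (Nat.cast '' Set.Icc 1 r)

lemma ncard_neighborSet_cyclePowerGraph {m r : ℕ} (hrm : 2 * r < m) (v : ZMod m) :
    ((cyclePowerGraph m r).neighborSet v).ncard = 2 * r := by
  set J : Set (ZMod m) := Nat.cast '' Set.Icc 1 r
  have hJ : J.Finite := (Set.finite_Icc 1 r).image _
  have hinj : Set.InjOn (Nat.cast : ℕ → ZMod m) (Set.Icc 1 r) := fun a ha b hb hab =>
    (ZMod.natCast_eq_natCast_iff_of_lt (by grind) (by grind)).mp hab
  have hdisj : Disjoint J (-J) := by
    rw [Set.disjoint_left]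
    rintro _ ⟨a, ha, rfl⟩ ⟨b, hb, hba⟩
    exact ZMod.natCast_ne_neg_natCast (m := m) (a := b) (b := a) (by grind) (by grind) hba
  have hzero : (0 : ZMod m) ∉ J ∪ -J := by
    rintro (⟨a, ha, h⟩ | ⟨a, ha, h⟩) <;>
      exact ZMod.natCast_ne_neg_natCast (m := m) (a := a) (b := 0) (by grind) (by grind)
        (by simpa using h)
  rw [cyclePowerGraph, ncard_neighborSet_circulantGraph, Set.sdiff_singleton_eq_self hzero,
    Set.ncard_union_eq hdisj hJ hJ.neg, Set.ncard_neg, hinj.ncard_image, Set.ncard_Icc_nat]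
  omega

def halfShiftMatching (h : ℕ) : SimpleGraph (ZMod (2 * h + 1)) :=
  fromRel fun x y => x.val ∈ Set.Icc 1 h ∧ y.val = x.val + h

lemma ncard_neighborSet_halfShiftMatching (h : ℕ) (x : ZMod (2 * h + 1)) :
    ((halfShiftMatching h).neighborSet x).ncard = if x = 0 then 0 else 1 := by
  have hx := ZMod.val_lt x
  have hval : ∀ y : ZMod (2 * h + 1), y ∈ (halfShiftMatching h).neighborSet x ↔
      x.val ≠ y.val ∧ (x.val ∈ Set.Icc 1 h ∧ y.val = x.val + h ∨
        y.val ∈ Set.Icc 1 h ∧ x.val = y.val + h) := fun y => by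
    simp [halfShiftMatching, (ZMod.val_injective _).ne_iff]
  split_ifs with hx0
  · subst hx0
    rw [Set.ncard_eq_zero]
    ext y
    simp only [hval, ZMod.val_zero, Set.mem_Icc, Set.mem_empty_iff_false, iff_false]
    omega
  · have hxv : x.val ≠ 0 := (ZMod.val_ne_zero x).mpr hx0
    set p := if x.val ≤ h then x.val + h else x.val - h
    rw [Set.ncard_eq_one]
    refine ⟨(p : ZMod (2 * h + 1)), Set.ext fun y => ?_⟩
    have hy := ZMod.val_lt y
    rw [hval, Set.mem_singleton_iff, ← (ZMod.val_injective _).eq_iff,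
      ZMod.val_cast_of_lt (by grind), Set.mem_Icc, Set.mem_Icc]
    grind

lemma disjoint_cyclePowerGraph_halfShiftMatching {h r : ℕ} (hrh : r < h) :
    Disjoint (cyclePowerGraph (2 * h + 1) r) (halfShiftMatching h) := by
  have hshift {x y : ZMod (2 * h + 1)} (hxy : y.val = x.val + h) : y - x = h := by
    rw [← ZMod.natCast_zmod_val y, hxy, Nat.cast_add, ZMod.natCast_zmod_val, add_sub_cancel_left]
  have hjump {x y : ZMod (2 * h + 1)} (hxy : y.val = x.val + h) :
      x - y ∉ Nat.cast '' Set.Icc 1 r ∧ y - x ∉ Nat.cast '' Set.Icc 1 r := by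
    rw [← neg_sub, hshift hxy]
    constructor
    · rintro ⟨a, ha, hah⟩
      exact ZMod.natCast_ne_neg_natCast (by grind) (by grind) hah
    · rintro ⟨a, ha, hah⟩
      have := (ZMod.natCast_eq_natCast_iff_of_lt (by grind) (by grind)).mp hah
      grind
  rw [disjoint_left]
  rintro x y ⟨-, hxy⟩ ⟨-, ⟨-, hm⟩ | ⟨-, hm⟩⟩
  · have := hjump hm; tauto
  · have := hjump hm; tauto

end SimpleGraph

lemma compAdjB_irrefl (a : ℕ) : ¬ compAdjB a a := by
  simp only [compAdjB, min_self, max_self]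
  omega

lemma ncard_setOf_compAdjB {k : ℕ} (hk : k % 2 = 1) (i : Fin (k + 1 + k % 2)) :
    {j : Fin (k + 1 + k % 2) | compAdjB i j}.ncard = if i.val = 1 then 2 else 1 := by
  have hi := i.isLt
  split_ifs with hi1
  · rw [show {j : Fin (k + 1 + k % 2) | compAdjB i j} = {⟨0, by omega⟩, ⟨2, by omega⟩} by
      ext j
      simp only [compAdjB, Set.mem_ofPred_eq, Set.mem_insert_iff, Set.mem_singleton_iff,
        Fin.ext_iff, Nat.odd_iff, Nat.min_def, Nat.max_def]
      split_ifs <;> omega]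
    exact Set.ncard_pair (by simp [Fin.ext_iff])
  · rw [Set.ncard_eq_one]
    refine ⟨⟨if i.val = 0 ∨ i.val = 2 then 1
      else if i.val % 2 = 1 then i.val + 1 else i.val - 1, by split_ifs <;> omega⟩, ?_⟩
    ext j
    simp only [compAdjB, Set.mem_ofPred_eq, Set.mem_singleton_iff, Fin.ext_iff, Nat.odd_iff,
      Nat.min_def, Nat.max_def]
    split_ifs <;> omega

lemma ncard_neighborSet_BGraph (k : ℕ) (i : Fin (k + 1 + k % 2)) :
    ((BGraph k).neighborSet i).ncard = if k % 2 = 1 ∧ i.val = 1 then k - 1 else k := by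
  set C := {j : Fin (k + 1 + k % 2) | k % 2 = 1 ∧ compAdjB i j}
  have hnbr : (BGraph k).neighborSet i = (insert i C)ᶜ := by
    ext j
    simp only [SimpleGraph.mem_neighborSet, BGraph, Set.mem_compl_iff, Set.mem_insert_iff,
      Set.mem_ofPred_eq, C]
    tauto
  have hC : C.ncard = if k % 2 = 1 then (if i.val = 1 then 2 else 1) else 0 := by
    by_cases hk : k % 2 = 1
    · simpa [C, hk] using ncard_setOf_compAdjB hk i
    · simp [C, hk]
  have hcard := Set.ncard_add_ncard_compl (insert i C)
  rw [Set.ncard_insert_of_notMem (fun h => compAdjB_irrefl _ h.2), Nat.card_eq_fintype_card,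
    Fintype.card_fin, ← hnbr] at hcard
  split_ifs at hC <;> grind

lemma exists_isRegularGraph_fin_of_isContained {V W : Type*} [Fintype W] {B : SimpleGraph V}
    {H : SimpleGraph W} {n d : ℕ} (hW : Fintype.card W = n) (hH : IsRegularGraph H d)
    (hBH : B ⊑ H) :
    ∃ G : SimpleGraph (Fin n), IsRegularGraph G d ∧
      ∃ f : V ↪ Fin n, ∀ i j, B.Adj i j → G.Adj (f i) (f j) := by
  obtain ⟨c⟩ := hBH
  let e := Fintype.equivFinOfCardEq hW
  refine ⟨H.comap e.symm,
    fun v => (Nat.card_congr ((Iso.comap e.symm H).mapNeighborSet v)).trans (hH _),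
    c.toEmbedding.trans e.toEmbedding, fun i j hij => ?_⟩
  simpa [Copy.toEmbedding] using c.toHom.map_adj hij

lemma isRegularGraph_BGraph_sum_cyclePowerGraph {k m : ℕ} (hk : k % 2 = 0) (hkm : k < m) :
    IsRegularGraph (BGraph k ⊕g cyclePowerGraph m (k / 2)) k := by
  rintro (i | x) <;> rw [Nat.card_coe_set_eq]
  · rw [ncard_neighborSet_sum_inl, ncard_neighborSet_BGraph, if_neg (by omega)]
  · rw [ncard_neighborSet_sum_inr, ncard_neighborSet_cyclePowerGraph (by omega)]
    omega

lemma isRegularGraph_BGraph_sum_cyclePowerGraph_sup_halfShiftMatching_sup_edge {k h : ℕ}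
    (hk : k % 2 = 1) (hkh : k / 2 < h) :
    IsRegularGraph
      ((BGraph k ⊕g (cyclePowerGraph (2 * h + 1) (k / 2) ⊔ halfShiftMatching h)) ⊔
        edge (.inl ⟨1, by omega⟩) (.inr 0)) k := by
  intro v
  rw [Nat.card_coe_set_eq,
    ncard_neighborSet_sup_of_disjoint ((disjoint_edge _).mpr (not_adj_sum_inl_inr _ _)),
    ncard_neighborSet_edge Sum.inl_ne_inr]
  rcases v with i | x
  · rw [ncard_neighborSet_sum_inl, ncard_neighborSet_BGraph]
    simp only [Sum.inl.injEq, reduceCtorEq, or_false, Fin.ext_iff]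
    split_ifs <;> omega
  · rw [ncard_neighborSet_sum_inr,
      ncard_neighborSet_sup_of_disjoint (disjoint_cyclePowerGraph_halfShiftMatching hkh),
      ncard_neighborSet_cyclePowerGraph (by omega), ncard_neighborSet_halfShiftMatching]
    simp only [reduceCtorEq, Sum.inr.injEq, false_or]
    split_ifs <;> omega

theorem exists_regular_with_BGraph_subgraph_general (k n : ℕ)
    (hn : 3 * k + 5 ≤ n) (heven : Even (n * k)) :
    ∃ G : SimpleGraph (Fin n), IsRegularGraph G k ∧
      ∃ f : Fin (k + 1 + k % 2) ↪ Fin n,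
        ∀ i j, (BGraph k).Adj i j → G.Adj (f i) (f j) := by
  rcases Nat.mod_two_eq_zero_or_one k with hk | hk
  · have : NeZero (n - (k + 1)) := ⟨by omega⟩
    refine exists_isRegularGraph_fin_of_isContained ?_
      (isRegularGraph_BGraph_sum_cyclePowerGraph hk (m := n - (k + 1)) (by omega))
      ⟨Embedding.sumInl.toCopy⟩
    simp only [Fintype.card_sum, Fintype.card_fin, ZMod.card]
    omega
  · have hn2 : n % 2 = 0 := by
      rcases Nat.even_mul.mp heven with h | h <;> grind
    refine exists_isRegularGraph_fin_of_isContained ?_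
      (isRegularGraph_BGraph_sum_cyclePowerGraph_sup_halfShiftMatching_sup_edge hk
        (h := (n - k - 3) / 2) (by omega))
      (IsContained.mono_right ⟨Embedding.sumInl.toCopy⟩ le_sup_left)
    simp only [Fintype.card_sum, Fintype.card_fin, ZMod.card]
    omega

/-- Theorem: for `k ≥ 2` and any `n ≥ 3k + 5` with `nk` even, there is a `k`-regular
graph on `n` vertices containing `B_k` as a subgraph. -/
theorem exists_regular_with_BGraph_subgraph (k n : ℕ) (hk : 2 ≤ k)
    (hn : 3 * k + 5 ≤ n) (heven : Even (n * k)) :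
    ∃ G : SimpleGraph (Fin n), IsRegularGraph G k ∧
      ∃ f : Fin (k + 1 + k % 2) ↪ Fin n,
        ∀ i j, (BGraph k).Adj i j → G.Adj (f i) (f j) :=
  exists_regular_with_BGraph_subgraph_general k n hn heven
end
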